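/- arXiv:1907.09858 — 4 statements merged into one kernel-verified Lean document; each statement's English description precedes it below -/
import Mathlib

section
/- Let V, W be affine varieties in ℂ^n with V irreducible of dimension d, and let π : ℂ^n → ℂ^d be the projection onto d fixed coordinates. If π(V ∩ W) contains a non-empty Euclidean open subset of ℂ^d, then V ⊆ W. -/
/-!
Let `R = ℂ[x₁, …, xₙ]/I(V)`, a domain of Krull dimension `d`, and let `zⱼ` be the image of
`x_{ιⱼ}`. A polynomial relation `q(z) = 0` means that `q ∘ π` vanishes on `V`, hence `q` vanishes
on the open set `O ⊆ π(V)`, so `q = 0`: the `zⱼ` are algebraically independent. By Noether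
normalization the transcendence degree of `R` is at most its Krull dimension `d`, so every
`p ∈ R` is algebraic over `ℂ[z]`. If `p ≠ 0` in `R`, some nonzero `q(z)` is a multiple of `p`;
then `q ∘ π` vanishes on `V ∩ W`, where `p` does, hence on `O`, which is impossible.
-/

open MvPolynomial Topology

theorem MvPolynomial.eq_zero_of_forall_eval_eq_zero_of_isOpen {R σ : Type*} [CommRing R]
    [IsDomain R] [TopologicalSpace R] [T1Space R] [∀ r : R, Filter.NeBot (𝓝[≠] r)] [Finite σ]
    {p : MvPolynomial σ R} {U : Set (σ → R)} (hU : IsOpen U) (hne : U.Nonempty)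
    (h : ∀ x ∈ U, eval x p = 0) : p = 0 := by
  obtain ⟨a, ha⟩ := hne
  obtain ⟨u, hu, huU⟩ := isOpen_pi_iff'.1 hU a ha
  refine funext_set u (fun i => infinite_of_mem_nhds (a i) ((hu i).1.mem_nhds (hu i).2))
    fun x hx => ?_
  simpa using h x (huU hx)

theorem ringKrullDim_le_of_isIntegral {R S : Type*} [CommRing R] [CommRing S] [Algebra R S]
    [Algebra.IsIntegral R S] [FaithfulSMul R S] :
    ringKrullDim R ≤ ringKrullDim S := by
  refine iSup_le fun l => ?_
  obtain ⟨P, hP, hPl⟩ := (Ideal.nonempty_primesOver (S := S) l.head.asIdeal).some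
  obtain ⟨L, hL, -⟩ := Ideal.exists_ltSeries_of_hasGoingUp l P
  exact hL ▸ Order.LTSeries.length_le_krullDim L

theorem AlgebraicIndependent.natCard_le_ringKrullDim {K A ι : Type*} [Field K] [CommRing A]
    [IsDomain A] [Algebra K A] [Algebra.FiniteType K A] [Finite ι] {x : ι → A}
    (hx : AlgebraicIndependent K x) : (Nat.card ι : WithBot ℕ∞) ≤ ringKrullDim A := by
  obtain ⟨s, g, hinj, hint⟩ := exists_integral_inj_algHom_of_fg K A
  algebraize [g.toRingHom]
  have : FaithfulSMul (MvPolynomial (Fin s) K) A :=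
    (faithfulSMul_iff_algebraMap_injective _ _).2 hinj
  have htrdeg : Algebra.trdeg K A = s := by
    have := lift_trdeg_add_eq K (MvPolynomial (Fin s) K) A
    rw [trdeg_eq_zero (R := MvPolynomial (Fin s) K) (A := A)] at this
    simpa using this.symm
  have hcard : Nat.card ι ≤ s := by
    have := hx.lift_cardinalMk_le_trdeg
    rw [htrdeg, ← Nat.cast_card] at this
    simpa using this
  calc (Nat.card ι : WithBot ℕ∞) ≤ s := by exact_mod_cast hcard
    _ = ringKrullDim (MvPolynomial (Fin s) K) := by
      simp [MvPolynomial.ringKrullDim_of_isNoetherianRing]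
    _ ≤ ringKrullDim A := ringKrullDim_le_of_isIntegral

theorem AlgebraicIndependent.isAlgebraic_of_ringKrullDim_le {K A ι : Type*} [Field K]
    [CommRing A] [IsDomain A] [Algebra K A] [Algebra.FiniteType K A] [Finite ι] {x : ι → A}
    (hx : AlgebraicIndependent K x) (hdim : ringKrullDim A ≤ Nat.card ι) (y : A) :
    IsAlgebraic (Algebra.adjoin K (Set.range x)) y := by
  by_contra hy
  have := ((hx.option_iff_transcendental y).2 hy).natCard_le_ringKrullDim
  rw [Finite.card_option] at this
  have := this.trans hdim
  norm_cast at this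
  omega

theorem IsAlgebraic.exists_ne_zero_dvd_algebraMap {R A : Type*} [CommRing R] [CommRing A]
    [IsDomain A] [Algebra R A] {y : A} (halg : IsAlgebraic R y) (hy : y ≠ 0) :
    ∃ r : R, r ≠ 0 ∧ y ∣ algebraMap R A r := by
  have := Ideal.comap_ne_bot_of_algebraic_mem hy (Ideal.mem_span_singleton_self y) halg
  obtain ⟨r, hr, hr0⟩ := Submodule.exists_mem_ne_zero_of_ne_bot this
  exact ⟨r, hr0, Ideal.mem_span_singleton.1 hr⟩

theorem AlgebraicIndependent.exists_ne_zero_dvd_aeval {K A ι : Type*} [Field K]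
    [CommRing A] [IsDomain A] [Algebra K A] [Algebra.FiniteType K A] [Finite ι] {x : ι → A}
    (hx : AlgebraicIndependent K x) (hdim : ringKrullDim A ≤ Nat.card ι) {y : A} (hy : y ≠ 0) :
    ∃ q : MvPolynomial ι K, q ≠ 0 ∧ y ∣ aeval x q := by
  obtain ⟨⟨b, hb⟩, hb0, hyb⟩ :=
    (hx.isAlgebraic_of_ringKrullDim_le hdim y).exists_ne_zero_dvd_algebraMap hy
  rw [Algebra.adjoin_range_eq_range_aeval] at hb
  obtain ⟨q, rfl⟩ := hb
  refine ⟨q, fun hq => hb0 (Subtype.ext ?_), hyb⟩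
  simp [hq]

theorem projection_open_implies_contained_general (n d : ℕ)
    (T : Finset (MvPolynomial (Fin n) ℂ))
    (V W : Set (Fin n → ℂ))
    (hW : W = {x : Fin n → ℂ | ∀ p ∈ T, MvPolynomial.eval x p = 0})
    (hirr : (MvPolynomial.vanishingIdeal ℂ V).IsPrime)
    (hdim : ringKrullDim
      (MvPolynomial (Fin n) ℂ ⧸ MvPolynomial.vanishingIdeal ℂ V) = (d : WithBot (WithTop ℕ)))
    (ι : Fin d → Fin n)
    (O : Set (Fin d → ℂ)) (hO : IsOpen O) (hOne : O.Nonempty)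
    (hOsub : O ⊆ (fun x : Fin n → ℂ => x ∘ ι) '' (V ∩ W)) :
    V ⊆ W := by
  set I := vanishingIdeal ℂ V
  let z : Fin d → MvPolynomial (Fin n) ℂ ⧸ I := fun j => Ideal.Quotient.mk I (X (ι j))
  have haeval_z (q : MvPolynomial (Fin d) ℂ) : aeval z q = Ideal.Quotient.mk I (rename ι q) := by
    rw [← Ideal.Quotient.mkₐ_eq_mk ℂ, aeval_unique (Ideal.Quotient.mkₐ ℂ I), aeval_rename]
    rfl
  have heq_zero (q : MvPolynomial (Fin d) ℂ) (hq : ∀ x ∈ V ∩ W, eval x (rename ι q) = 0) :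
      q = 0 := by
    refine eq_zero_of_forall_eval_eq_zero_of_isOpen hO hOne fun y hy => ?_
    obtain ⟨x, hx, rfl⟩ := hOsub hy
    simpa [eval_rename] using hq x hx
  have hz : AlgebraicIndependent ℂ z := by
    refine algebraicIndependent_iff.2 fun q hq => heq_zero q fun x hx => ?_
    rw [haeval_z, Ideal.Quotient.eq_zero_iff_mem] at hq
    exact mem_vanishingIdeal_iff.1 hq x hx.1
  rw [hW]
  intro x hx p hp
  by_contra hpx
  have hp0 : Ideal.Quotient.mk I p ≠ 0 := fun h =>
    hpx (mem_vanishingIdeal_iff.1 (Ideal.Quotient.eq_zero_iff_mem.1 h) x hx)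
  obtain ⟨q, hq0, h, hh⟩ := hz.exists_ne_zero_dvd_aeval (by rw [hdim, Nat.card_fin]; rfl) hp0
  obtain ⟨h, rfl⟩ := Ideal.Quotient.mk_surjective h
  rw [haeval_z, ← map_mul, Ideal.Quotient.eq] at hh
  refine hq0 (heq_zero q fun y ⟨hyV, hyW⟩ => ?_)
  have hpy : eval y p = 0 := by rw [hW] at hyW; exact hyW p hp
  simpa [hpy] using mem_vanishingIdeal_iff.1 hh y hyV

/-- Let `V, W ⊆ ℂⁿ` be affine varieties (zero sets of finitely many polynomials), with `V`
irreducible (its vanishing ideal is prime) of dimension `d` (the Krull dimension of its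
coordinate ring is `d`), and let `π : ℂⁿ → ℂᵈ` be the projection onto `d` fixed
coordinates (given by an injection `ι : Fin d ↪ Fin n`). If `π(V ∩ W)` contains a
non-empty Euclidean open subset of `ℂᵈ`, then `V ⊆ W`. -/
theorem projection_open_implies_contained (n d : ℕ)
    (S T : Finset (MvPolynomial (Fin n) ℂ))
    (V W : Set (Fin n → ℂ))
    (hV : V = {x : Fin n → ℂ | ∀ p ∈ S, MvPolynomial.eval x p = 0})
    (hW : W = {x : Fin n → ℂ | ∀ p ∈ T, MvPolynomial.eval x p = 0})
    (hirr : (MvPolynomial.vanishingIdeal ℂ V).IsPrime)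
    (hdim : ringKrullDim
      (MvPolynomial (Fin n) ℂ ⧸ MvPolynomial.vanishingIdeal ℂ V) = (d : WithBot (WithTop ℕ)))
    (ι : Fin d → Fin n) (hι : Function.Injective ι)
    (O : Set (Fin d → ℂ)) (hO : IsOpen O) (hOne : O.Nonempty)
    (hOsub : O ⊆ (fun x : Fin n → ℂ => x ∘ ι) '' (V ∩ W)) :
    V ⊆ W :=
  projection_open_implies_contained_general n d T V W hW hirr hdim ι O hO hOne hOsub
end

section
/- Let C be a finite subset of ℂ, x ∈ ℂ, and M a positive integer. Then there exists a positive integer M′, depending only on M and on [ℚ(C,x):ℚ(x)]_alg, such that for every y ∈ ℂ that is algebraic over ℚ(x) and satisfies [ℚ(C,x,y):ℚ(C,x)] ≤ M, we have [ℚ(x,y):ℚ(x)] ≤ M′. -/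
/-!
A purely transcendental extension `K₀ = ℚ(x)(T)` does not change the degree of an element `y`
algebraic over `ℚ(x)`: by Gauss's lemma the minimal polynomial of `y` stays irreducible over the
fraction field of the polynomial ring `ℚ(x)[T]`. Choosing `K₀` with `[ℚ(C,x) : K₀] = D`, the
tower `K₀ ⊆ ℚ(C,x) ⊆ ℚ(C,x,y)` then gives `[ℚ(x,y) : ℚ(x)] = [K₀(y) : K₀] ≤ D · M`.
-/

set_option synthInstance.maxHeartbeats 1000000

/-- The degree `[B : A]` of one subfield of `ℂ` over another (for `A ≤ B`), realized as
the `A`-dimension of the intermediate field generated by `B` over `A`. -/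
noncomputable def sfDeg (A B : Subfield ℂ) : ℕ :=
  Module.finrank A (IntermediateField.adjoin A (B : Set ℂ))

/-- `B` is a purely transcendental extension of `A` (inside `ℂ`): `B = A(T)` for a set `T`
algebraically independent over `A`. -/
def IsPurelyTranscendental (A B : Subfield ℂ) : Prop :=
  ∃ T : Set ℂ, AlgebraicIndependent A (fun t : T => (t : ℂ)) ∧
    B = Subfield.closure ((A : Set ℂ) ∪ T)

/-- `[B : A]_alg = m`: `m` is the smallest positive integer such that there is an
intermediate field `A ≤ K₀ ≤ B` with `K₀` purely transcendental over `A` and `[B : K₀] = m`. -/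
def IsAlgDeg (A B : Subfield ℂ) (m : ℕ) : Prop :=
  0 < m ∧
    (∃ K₀ : Subfield ℂ, A ≤ K₀ ∧ K₀ ≤ B ∧ IsPurelyTranscendental A K₀ ∧ sfDeg K₀ B = m) ∧
    ∀ m' : ℕ, 0 < m' →
      (∃ K₀ : Subfield ℂ, A ≤ K₀ ∧ K₀ ≤ B ∧ IsPurelyTranscendental A K₀ ∧ sfDeg K₀ B = m') →
      m ≤ m'

open IntermediateField Polynomial Module

lemma prime_map_C_mvPolynomial {F : Type*} [Field F] (ι : Type*) {f : F[X]} (hf : Prime f) :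
    Prime (f.map (MvPolynomial.C : F →+* MvPolynomial ι F)) := by
  let e : MvPolynomial ι F[X] ≃ₐ[F] (MvPolynomial ι F)[X] :=
    (MvPolynomial.optionEquivRight F ι).symm.trans (MvPolynomial.optionEquivLeft F ι)
  have hX : e (MvPolynomial.C X) = X := by
    have : (MvPolynomial.optionEquivRight F ι).symm (MvPolynomial.C X) = MvPolynomial.X none := by
      rw [AlgEquiv.symm_apply_eq, MvPolynomial.optionEquivRight_X_none]
    simp only [e, AlgEquiv.trans_apply, this, MvPolynomial.optionEquivLeft_X_none]
  have hcomp : (e : MvPolynomial ι F[X] →ₐ[F] (MvPolynomial ι F)[X]).comp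
      (IsScalarTower.toAlgHom F F[X] (MvPolynomial ι F[X])) = mapAlg F (MvPolynomial ι F) :=
    Polynomial.algHom_ext (by simpa [mapAlg_eq_map, MvPolynomial.algebraMap_eq] using hX)
  have he : e (MvPolynomial.C f) = f.map MvPolynomial.C := by
    simpa [mapAlg_eq_map, MvPolynomial.algebraMap_eq] using AlgHom.congr_fun hcomp f
  rw [← he]
  exact (MulEquiv.prime_iff e.toMulEquiv).mpr ((MvPolynomial.prime_C_iff ι).mpr hf)

lemma irreducible_map_fractionRing_mvPolynomial {F : Type*} [Field F] (ι : Type*) {f : F[X]}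
    (hf : Irreducible f) (hm : f.Monic) :
    Irreducible (f.map (algebraMap F (FractionRing (MvPolynomial ι F)))) := by
  have h := ((hm.map MvPolynomial.C).irreducible_iff_irreducible_map_fraction_map
    (K := FractionRing (MvPolynomial ι F))).mp (prime_map_C_mvPolynomial ι hf.prime).irreducible
  rwa [Polynomial.map_map, ← MvPolynomial.algebraMap_eq, ← IsScalarTower.algebraMap_eq] at h

variable {F E : Type*} [Field F] [Field E] [Algebra F E]

theorem AlgebraicIndependent.minpoly_adjoin_range {ι : Type*} {t : ι → E}
    (ht : AlgebraicIndependent F t) {y : E} (hy : IsIntegral F y) :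
    minpoly (adjoin F (Set.range t)) y =
      (minpoly F y).map (algebraMap F (adjoin F (Set.range t))) := by
  have hirr : Irreducible ((minpoly F y).map (algebraMap F (adjoin F (Set.range t)))) := by
    rw [← ht.aevalEquivField.toAlgHom.comp_algebraMap, ← Polynomial.map_map]
    exact (MulEquiv.irreducible_iff (mapEquiv ht.aevalEquivField.toRingEquiv).toMulEquiv).mpr
      (irreducible_map_fractionRing_mvPolynomial ι (minpoly.irreducible hy) (minpoly.monic hy))
  refine (minpoly.eq_of_irreducible_of_monic hirr ?_ ((minpoly.monic hy).map _)).symm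
  rw [aeval_map_algebraMap, minpoly.aeval]

theorem AlgebraicIndependent.finrank_adjoin_range_adjoin_simple {ι : Type*} {t : ι → E}
    (ht : AlgebraicIndependent F t) {y : E} (hy : IsIntegral F y) :
    finrank (adjoin F (Set.range t)) (adjoin (adjoin F (Set.range t)) {y}) = finrank F F⟮y⟯ := by
  rw [adjoin.finrank hy.tower_top, adjoin.finrank hy, ht.minpoly_adjoin_range hy,
    (minpoly.monic hy).natDegree_map]

theorem finrank_adjoin_simple_le_finrank_mul (L : IntermediateField F E) [FiniteDimensional F L]
    {y : E} (hy : IsIntegral F y) : finrank F F⟮y⟯ ≤ finrank F L * finrank L L⟮y⟯ := by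
  have : FiniteDimensional L L⟮y⟯ := adjoin.finiteDimensional hy.tower_top
  have : Module.Free L L⟮y⟯ := .of_divisionRing _ _
  have : FiniteDimensional F (L⟮y⟯.restrictScalars F) := FiniteDimensional.trans F L L⟮y⟯
  calc finrank F F⟮y⟯ ≤ finrank F (L⟮y⟯.restrictScalars F) :=
        finrank_le_of_le_right (adjoin_simple_le_iff.mpr (mem_adjoin_simple_self L y))
    _ = finrank F L * finrank L L⟮y⟯ := (finrank_mul_finrank F L L⟮y⟯).symm

theorem IsIntegral.of_subfield_le {A K : Subfield E} (h : A ≤ K) {y : E}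
    (hy : IsIntegral A y) : IsIntegral K y :=
  letI : Algebra A K := (Subfield.inclusion h).toAlgebra
  haveI : IsScalarTower A K E := .of_algebraMap_eq fun _ ↦ rfl
  hy.tower_top

theorem IntermediateField.finrank_toSubfield_adjoin_simple (L : IntermediateField F E) (y : E) :
    finrank L.toSubfield (adjoin L.toSubfield {y}) = finrank L L⟮y⟯ := rfl

theorem IsPurelyTranscendental.finrank_adjoin_simple {A K : Subfield ℂ}
    (h : IsPurelyTranscendental A K) {y : ℂ} (hy : IsIntegral A y) :
    finrank K (adjoin K {y}) = finrank A (adjoin A {y}) := by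
  obtain ⟨T, hT, rfl⟩ := h
  have hK : (adjoin A (Set.range fun t : T ↦ (t : ℂ))).toSubfield =
      Subfield.closure ((A : Set ℂ) ∪ T) := by
    rw [adjoin_toSubfield, Subtype.range_coe]
    congr 2
    exact Subtype.range_coe
  rw [← hK, finrank_toSubfield_adjoin_simple]
  exact hT.finrank_adjoin_range_adjoin_simple hy

theorem finrank_adjoin_simple_le_sfDeg_mul {K L : Subfield ℂ} (hKL : K ≤ L) (hD : 0 < sfDeg K L)
    {y : ℂ} (hy : IsIntegral K y) :
    finrank K (adjoin K {y}) ≤ sfDeg K L * finrank L (adjoin L {y}) := by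
  have : FiniteDimensional K (adjoin K (L : Set ℂ)) :=
    Module.finite_of_finrank_pos hD
  have hL : (adjoin K (L : Set ℂ)).toSubfield = L := by
    rw [adjoin_toSubfield]
    refine le_antisymm (Subfield.closure_le.mpr ?_) fun z hz ↦ Subfield.subset_closure (Or.inr hz)
    rintro z (⟨a, rfl⟩ | hz)
    exacts [hKL a.2, hz]
  calc finrank K (adjoin K {y})
      ≤ sfDeg K L * finrank (adjoin K (L : Set ℂ)) (adjoin K (L : Set ℂ))⟮y⟯ :=
        finrank_adjoin_simple_le_finrank_mul _ hy
    _ = sfDeg K L * finrank L (adjoin L {y}) := by rw [← finrank_toSubfield_adjoin_simple, hL]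

theorem bounded_degree_descent_general (M : ℕ) (D : ℕ) :
    ∃ M' : ℕ, 0 < M' ∧
      ∀ (C : Set ℂ), C.Finite → ∀ x : ℂ,
        IsAlgDeg (Subfield.closure ({x} : Set ℂ)) (Subfield.closure (C ∪ {x})) D →
        ∀ y : ℂ, IsAlgebraic (Subfield.closure ({x} : Set ℂ)) y →
          Module.finrank (Subfield.closure (C ∪ {x}))
              (IntermediateField.adjoin (Subfield.closure (C ∪ {x})) {y}) ≤ M →
          Module.finrank (Subfield.closure ({x} : Set ℂ))
              (IntermediateField.adjoin (Subfield.closure ({x} : Set ℂ)) {y}) ≤ M' := by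
  refine ⟨max (D * M) 1, lt_max_of_lt_right one_pos, ?_⟩
  rintro C - x ⟨hD, ⟨K₀, hAK₀, hK₀L, hK₀, rfl⟩, -⟩ y hy hyM
  set A := Subfield.closure ({x} : Set ℂ)
  set L := Subfield.closure (C ∪ {x})
  have hyA : IsIntegral A y := hy.isIntegral
  calc finrank A (adjoin A {y}) = finrank K₀ (adjoin K₀ {y}) :=
        (hK₀.finrank_adjoin_simple hyA).symm
    _ ≤ sfDeg K₀ L * finrank L (adjoin L {y}) :=
        finrank_adjoin_simple_le_sfDeg_mul hK₀L hD (hyA.of_subfield_le hAK₀)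
    _ ≤ sfDeg K₀ L * M := Nat.mul_le_mul_left _ hyM
    _ ≤ max (sfDeg K₀ L * M) 1 := le_max_left _ _

/-- Let `C ⊆ ℂ` be finite, `x ∈ ℂ`, `M` a positive integer. There is a positive integer
`M'` depending only on `M` and `[ℚ(C,x) : ℚ(x)]_alg` such that every `y ∈ ℂ` algebraic over
`ℚ(x)` with `[ℚ(C,x,y) : ℚ(C,x)] ≤ M` satisfies `[ℚ(x,y) : ℚ(x)] ≤ M'`. -/
theorem bounded_degree_descent (M : ℕ) (hM : 0 < M) (D : ℕ) :
    ∃ M' : ℕ, 0 < M' ∧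
      ∀ (C : Set ℂ), C.Finite → ∀ x : ℂ,
        IsAlgDeg (Subfield.closure ({x} : Set ℂ)) (Subfield.closure (C ∪ {x})) D →
        ∀ y : ℂ, IsAlgebraic (Subfield.closure ({x} : Set ℂ)) y →
          Module.finrank (Subfield.closure (C ∪ {x}))
              (IntermediateField.adjoin (Subfield.closure (C ∪ {x})) {y}) ≤ M →
          Module.finrank (Subfield.closure ({x} : Set ℂ))
              (IntermediateField.adjoin (Subfield.closure ({x} : Set ℂ)) {y}) ≤ M' :=
  bounded_degree_descent_general M D
end

section
/- Let p(X,Y) ∈ ℂ[X,Y] be a nonzero polynomial of degree m in X. Then the set D(p;G) of matrices g = [[a,b],[c,d]] ∈ M₂(ℤ) with positive determinant, gcd(a,b,c,d) = 1, and such that the polynomial (cX+d)^m · p((aX+b)/(cX+d), X) is identically zero, is finite. -/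
open Polynomial

private lemma gcd4_mul (k x y z w : ℤ) :
    Int.gcd (Int.gcd (k*x) (k*y)) (Int.gcd (k*z) (k*w))
      = k.natAbs * Int.gcd (Int.gcd x y) (Int.gcd z w) := by
  simp [Int.gcd_mul_left, Int.gcd_natCast_natCast, Nat.gcd_mul_left, Int.natAbs_abs]

private lemma matrix_eq_of_proj (g g' : Matrix (Fin 2) (Fin 2) ℤ)
    (hd : 0 < g.det)
    (hg : Int.gcd (Int.gcd (g 0 0) (g 0 1)) (Int.gcd (g 1 0) (g 1 1)) = 1)
    (hg' : Int.gcd (Int.gcd (g' 0 0) (g' 0 1)) (Int.gcd (g' 1 0) (g' 1 1)) = 1)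
    (h1 : g 0 0 * g' 1 0 = g' 0 0 * g 1 0)
    (h2 : g 0 0 * g' 1 1 + g 0 1 * g' 1 0 = g' 0 0 * g 1 1 + g' 0 1 * g 1 0)
    (h3 : g 0 1 * g' 1 1 = g' 0 1 * g 1 1) :
    g' = g ∨ g' = -g := by
  have hdet : g.det = g 0 0 * g 1 1 - g 0 1 * g 1 0 := Matrix.det_fin_two g
  have hD0 : g 0 0 * g 1 1 - g 0 1 * g 1 0 ≠ 0 := by rw [hdet] at hd; omega
  have e1 : (g 0 0 * g 1 1 - g 0 1 * g 1 0) * g' 0 0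
      = (g 0 0 * g' 1 1 - g 1 0 * g' 0 1) * g 0 0 := by
    linear_combination g 0 1 * h1 - g 0 0 * h2
  have e2 : (g 0 0 * g 1 1 - g 0 1 * g 1 0) * g' 0 1
      = (g 0 0 * g' 1 1 - g 1 0 * g' 0 1) * g 0 1 := by
    linear_combination (-(g 0 0)) * h3
  have e3 : (g 0 0 * g 1 1 - g 0 1 * g 1 0) * g' 1 0
      = (g 0 0 * g' 1 1 - g 1 0 * g' 0 1) * g 1 0 := by
    linear_combination g 1 1 * h1 - g 1 0 * h2
  have e4 : (g 0 0 * g 1 1 - g 0 1 * g 1 0) * g' 1 1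
      = (g 0 0 * g' 1 1 - g 1 0 * g' 0 1) * g 1 1 := by
    linear_combination (-(g 1 0)) * h3
  have A1 : Int.gcd (Int.gcd ((g 0 0 * g 1 1 - g 0 1 * g 1 0) * g' 0 0)
        ((g 0 0 * g 1 1 - g 0 1 * g 1 0) * g' 0 1))
      (Int.gcd ((g 0 0 * g 1 1 - g 0 1 * g 1 0) * g' 1 0)
        ((g 0 0 * g 1 1 - g 0 1 * g 1 0) * g' 1 1))
      = (g 0 0 * g 1 1 - g 0 1 * g 1 0).natAbs := by
    rw [gcd4_mul, hg', mul_one]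
  rw [e1, e2, e3, e4, gcd4_mul, hg, mul_one] at A1
  have hk : g 0 0 * g' 1 1 - g 1 0 * g' 0 1 = (g 0 0 * g 1 1 - g 0 1 * g 1 0)
      ∨ g 0 0 * g' 1 1 - g 1 0 * g' 0 1 = -(g 0 0 * g 1 1 - g 0 1 * g 1 0) :=
    Int.natAbs_eq_natAbs_iff.mp A1
  rcases hk with hk | hk
  · left
    ext i j
    rw [hk] at e1 e2 e3 e4
    fin_cases i <;> fin_cases j <;>
      [exact mul_left_cancel₀ hD0 e1; exact mul_left_cancel₀ hD0 e2;
       exact mul_left_cancel₀ hD0 e3; exact mul_left_cancel₀ hD0 e4]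
  · right
    ext i j
    rw [hk] at e1 e2 e3 e4
    fin_cases i <;> fin_cases j <;> simp only [Matrix.neg_apply, Fin.mk_zero, Fin.mk_one] <;>
      [exact mul_left_cancel₀ hD0 (by linarith);
       exact mul_left_cancel₀ hD0 (by linarith);
       exact mul_left_cancel₀ hD0 (by linarith);
       exact mul_left_cancel₀ hD0 (by linarith)]

private noncomputable def Tmap : MvPolynomial (Fin 2) ℂ →ₐ[ℂ] Polynomial (RatFunc ℂ) :=
  MvPolynomial.aeval (fun i : Fin 2 => if i = 0 then Polynomial.X else Polynomial.C RatFunc.X)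

private lemma ratfunc_X_transcendental : Transcendental ℂ (RatFunc.X : RatFunc ℂ) := by
  have h := (transcendental_algebraMap_iff (S := Polynomial ℂ) (A := RatFunc ℂ)
    (RatFunc.algebraMap_injective ℂ)).2 (Polynomial.transcendental_X ℂ)
  simpa [RatFunc.algebraMap_X] using h

private lemma Tmap_injective : Function.Injective Tmap := by
  have hf : Function.Injective
      (MvPolynomial.aeval (fun _ : Fin 1 => (RatFunc.X : RatFunc ℂ)) :
        MvPolynomial (Fin 1) ℂ →ₐ[ℂ] RatFunc ℂ) := by
    have h : AlgebraicIndependent ℂ (fun _ : Fin 1 => (RatFunc.X : RatFunc ℂ)) :=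
      algebraicIndependent_unique_type_iff.2 ratfunc_X_transcendental
    exact h
  have hhom : Tmap = (Polynomial.mapAlgHom
      (MvPolynomial.aeval (fun _ : Fin 1 => (RatFunc.X : RatFunc ℂ)))).comp
      (MvPolynomial.finSuccEquiv ℂ 1).toAlgHom := by
    apply MvPolynomial.algHom_ext
    intro i
    induction i using Fin.cases with
    | zero => simp [Tmap, MvPolynomial.finSuccEquiv_X_zero]
    | succ j =>
      simp [Tmap, MvPolynomial.finSuccEquiv_X_succ, Fin.succ_ne_zero]
  rw [hhom]
  exact (Polynomial.map_injective _ hf).comp (MvPolynomial.finSuccEquiv ℂ 1).injective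

private lemma Tmap_eval (x : RatFunc ℂ) (q : MvPolynomial (Fin 2) ℂ) :
    Polynomial.eval x (Tmap q)
      = MvPolynomial.aeval (fun i : Fin 2 => if i = 0 then x else RatFunc.X) q := by
  induction q using MvPolynomial.induction_on with
  | C a => simp [Tmap, Polynomial.algebraMap_apply]
  | add q r hq hr => simp [map_add, hq, hr]
  | mul_X q i hq =>
    rw [map_mul, Polynomial.eval_mul, hq, map_mul]
    congr 1
    by_cases hi : i = 0
    · subst hi; simp [Tmap]
    · have h1 : i = 1 := by fin_omega
      subst h1; simp [Tmap]

private lemma lin_ne_zero (c d : ℂ) (h : ¬(c = 0 ∧ d = 0)) :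
    RatFunc.C c * RatFunc.X + RatFunc.C d ≠ 0 := by
  intro h0
  have halg : algebraMap ℂ[X] (RatFunc ℂ)
      (Polynomial.C c * Polynomial.X + Polynomial.C d) = 0 := by
    simpa [map_add, map_mul, RatFunc.algebraMap_C, RatFunc.algebraMap_X] using h0
  have hpoly : (Polynomial.C c * Polynomial.X + Polynomial.C d : ℂ[X]) = 0 :=
    RatFunc.algebraMap_injective ℂ (by simpa using halg)
  apply h
  constructor
  · have := congrArg (fun q : ℂ[X] => q.coeff 1) hpoly; simpa using this
  · have := congrArg (fun q : ℂ[X] => q.coeff 0) hpoly; simpa using this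

private lemma cross_eqs (a b c d a' b' c' d' : ℂ)
    (hcd : RatFunc.C c * RatFunc.X + RatFunc.C d ≠ 0)
    (hcd' : RatFunc.C c' * RatFunc.X + RatFunc.C d' ≠ 0)
    (h : (RatFunc.C a * RatFunc.X + RatFunc.C b) / (RatFunc.C c * RatFunc.X + RatFunc.C d)
       = (RatFunc.C a' * RatFunc.X + RatFunc.C b') / (RatFunc.C c' * RatFunc.X + RatFunc.C d')) :
    a * c' = a' * c ∧ (a * d' + b * c' = a' * d + b' * c) ∧ b * d' = b' * d := by
  rw [div_eq_div_iff hcd hcd'] at h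
  have halg : algebraMap ℂ[X] (RatFunc ℂ)
      ((Polynomial.C a * Polynomial.X + Polynomial.C b)
        * (Polynomial.C c' * Polynomial.X + Polynomial.C d'))
    = algebraMap ℂ[X] (RatFunc ℂ)
      ((Polynomial.C a' * Polynomial.X + Polynomial.C b')
        * (Polynomial.C c * Polynomial.X + Polynomial.C d)) := by
    simpa [map_add, map_mul, RatFunc.algebraMap_C, RatFunc.algebraMap_X] using h
  have hpoly := RatFunc.algebraMap_injective ℂ halg
  have E0 := congrArg (Polynomial.eval 0) hpoly
  have E1 := congrArg (Polynomial.eval 1) hpoly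
  have Em := congrArg (Polynomial.eval (-1)) hpoly
  simp only [Polynomial.eval_mul, Polynomial.eval_add, Polynomial.eval_C, Polynomial.eval_X,
    mul_zero, zero_add, mul_one, mul_neg] at E0 E1 Em
  refine ⟨?_, ?_, ?_⟩
  · linear_combination (1/2 : ℂ) * E1 + (1/2 : ℂ) * Em - E0
  · linear_combination (1/2 : ℂ) * E1 - (1/2 : ℂ) * Em
  · linear_combination E0

private noncomputable def phi (g : Matrix (Fin 2) (Fin 2) ℤ) : RatFunc ℂ :=
  (RatFunc.C ((g 0 0 : ℤ) : ℂ) * RatFunc.X + RatFunc.C ((g 0 1 : ℤ) : ℂ)) /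
    (RatFunc.C ((g 1 0 : ℤ) : ℂ) * RatFunc.X + RatFunc.C ((g 1 1 : ℤ) : ℂ))

private lemma phi_def (g : Matrix (Fin 2) (Fin 2) ℤ) :
    phi g = (RatFunc.C ((g 0 0 : ℤ) : ℂ) * RatFunc.X + RatFunc.C ((g 0 1 : ℤ) : ℂ)) /
      (RatFunc.C ((g 1 0 : ℤ) : ℂ) * RatFunc.X + RatFunc.C ((g 1 1 : ℤ) : ℂ)) := rfl

private lemma den_ne (g : Matrix (Fin 2) (Fin 2) ℤ) (hdet : 0 < g.det) :
    RatFunc.C ((g 1 0 : ℤ) : ℂ) * RatFunc.X + RatFunc.C ((g 1 1 : ℤ) : ℂ) ≠ 0 := by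
  apply lin_ne_zero
  rintro ⟨h1, h2⟩
  have e1 : g 1 0 = 0 := by exact_mod_cast h1
  have e2 : g 1 1 = 0 := by exact_mod_cast h2
  rw [Matrix.det_fin_two, e1, e2] at hdet
  simp at hdet

/-- Let `p(X,Y) ∈ ℂ[X,Y]` be nonzero of degree `m` in `X` (variable `0` is `X`, variable
`1` is `Y`). The set `D(p;G)` of integer matrices `g = [[a,b],[c,d]]` with positive
determinant, `gcd(a,b,c,d) = 1`, and such that `(cX+d)^m · p((aX+b)/(cX+d), X)` is
identically zero (as a rational function), is finite. -/
theorem matrices_annihilating_polynomial_finite (p : MvPolynomial (Fin 2) ℂ)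
    (hp : p ≠ 0) (m : ℕ) (hm : m = p.degreeOf 0) :
    {g : Matrix (Fin 2) (Fin 2) ℤ |
      0 < g.det ∧
      Int.gcd (Int.gcd (g 0 0) (g 0 1)) (Int.gcd (g 1 0) (g 1 1)) = 1 ∧
      (RatFunc.C ((g 1 0 : ℤ) : ℂ) * RatFunc.X + RatFunc.C ((g 1 1 : ℤ) : ℂ)) ^ m *
          MvPolynomial.aeval
            (fun i : Fin 2 =>
              if i = 0 then
                (RatFunc.C ((g 0 0 : ℤ) : ℂ) * RatFunc.X + RatFunc.C ((g 0 1 : ℤ) : ℂ)) /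
                  (RatFunc.C ((g 1 0 : ℤ) : ℂ) * RatFunc.X + RatFunc.C ((g 1 1 : ℤ) : ℂ))
              else RatFunc.X) p = 0}.Finite := by
  classical
  set S : Set (Matrix (Fin 2) (Fin 2) ℤ) :=
    {g : Matrix (Fin 2) (Fin 2) ℤ |
      0 < g.det ∧
      Int.gcd (Int.gcd (g 0 0) (g 0 1)) (Int.gcd (g 1 0) (g 1 1)) = 1 ∧
      (RatFunc.C ((g 1 0 : ℤ) : ℂ) * RatFunc.X + RatFunc.C ((g 1 1 : ℤ) : ℂ)) ^ m *
          MvPolynomial.aeval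
            (fun i : Fin 2 =>
              if i = 0 then
                (RatFunc.C ((g 0 0 : ℤ) : ℂ) * RatFunc.X + RatFunc.C ((g 0 1 : ℤ) : ℂ)) /
                  (RatFunc.C ((g 1 0 : ℤ) : ℂ) * RatFunc.X + RatFunc.C ((g 1 1 : ℤ) : ℂ))
              else RatFunc.X) p = 0} with hSdef
  have hP : Tmap p ≠ 0 := fun h => hp (Tmap_injective (by simp [h]))
  have hroots : {x : RatFunc ℂ | (Tmap p).IsRoot x}.Finite := Polynomial.finite_setOf_isRoot hP
  have hroot : ∀ g ∈ S, (Tmap p).IsRoot (phi g) := by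
    intro g hg
    obtain ⟨hdet, hgcd, hzero⟩ := hg
    rw [← phi_def g] at hzero
    have hz2 : MvPolynomial.aeval (fun i : Fin 2 => if i = 0 then phi g else RatFunc.X) p = 0 := by
      rcases mul_eq_zero.mp hzero with h | h
      · exact absurd h (pow_ne_zero _ (den_ne g hdet))
      · exact h
    show Polynomial.eval (phi g) (Tmap p) = 0
    rw [Tmap_eval]
    exact hz2
  have hfib : ∀ r : RatFunc ℂ, {g | g ∈ S ∧ phi g = r}.Finite := by
    intro r
    rcases Set.eq_empty_or_nonempty {g | g ∈ S ∧ phi g = r} with he | ⟨g₀, hg₀S, hg₀r⟩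
    · rw [he]; exact Set.finite_empty
    · apply Set.Finite.subset ((Set.finite_singleton (-g₀)).insert g₀)
      rintro g ⟨hgS, hgr⟩
      obtain ⟨hdet₀, hgcd₀, -⟩ := hg₀S
      obtain ⟨hdet, hgcd, -⟩ := hgS
      have hphi : phi g₀ = phi g := by rw [hg₀r, hgr]
      rw [phi_def, phi_def] at hphi
      obtain ⟨hc1, hc2, hc3⟩ := cross_eqs _ _ _ _ _ _ _ _ (den_ne g₀ hdet₀) (den_ne g hdet) hphi
      have h1 : g₀ 0 0 * g 1 0 = g 0 0 * g₀ 1 0 := by exact_mod_cast hc1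
      have h2 : g₀ 0 0 * g 1 1 + g₀ 0 1 * g 1 0 = g 0 0 * g₀ 1 1 + g 0 1 * g₀ 1 0 := by
        exact_mod_cast hc2
      have h3 : g₀ 0 1 * g 1 1 = g 0 1 * g₀ 1 1 := by exact_mod_cast hc3
      rcases matrix_eq_of_proj g₀ g hdet₀ hgcd₀ hgcd h1 h2 h3 with h | h
      · exact Or.inl h
      · exact Or.inr (by simpa using h)
  apply Set.Finite.subset (hroots.biUnion (fun r _ => hfib r))
  intro g hg
  exact Set.mem_biUnion (hroot g hg) ⟨hg, rfl⟩
end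

section
/- Let U be an open subset of ℂ containing 0, and let f be a holomorphic function on U with f(0) ≠ 0. Then there are infinitely many z ∈ U \ {0} such that exp(1/z) = f(z). -/
/-!
Near `0` the function `f` has a holomorphic logarithm `g`, so it suffices to solve
`1 / z = g z + w` for infinitely many `w ∈ 2πiℤ`. Since `g` is Lipschitz near `0`, for `‖w‖`
large the map `z ↦ (g z + w)⁻¹` is a contraction of a small closed ball around `0` into itself,
and its fixed point is a solution. Distinct `w` give distinct solutions, because `w = z⁻¹ - g z`.
-/

open Complex Metric Set Filter Topology Bornology
open scoped NNReal

theorem exists_analyticAt_exp_eq {f : ℂ → ℂ} {a : ℂ} (hf : AnalyticAt ℂ f a) (ha : f a ≠ 0) :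
    ∃ g : ℂ → ℂ, AnalyticAt ℂ g a ∧ ∀ᶠ z in 𝓝 a, exp (g z) = f z := by
  have hslit : ∀ᶠ z in 𝓝 a, f z / f a ∈ slitPlane := by
    have : Tendsto (fun z => f z / f a) (𝓝 a) (𝓝 1) := by
      simpa [div_self ha] using hf.continuousAt.tendsto.div_const (f a)
    exact this.eventually (isOpen_slitPlane.mem_nhds one_mem_slitPlane)
  refine ⟨fun z => log (f z / f a) + log (f a), ?_, ?_⟩
  · exact (hf.div_const.clog (by rw [div_self ha]; exact one_mem_slitPlane)).add analyticAt_const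
  · filter_upwards [hslit] with z hz
    rw [exp_add, exp_log (slitPlane_ne_zero hz), exp_log ha, div_mul_cancel₀ _ ha]

theorem LipschitzOnWith.inv₀ {α 𝕜 : Type*} [PseudoMetricSpace α] [NormedField 𝕜]
    {h : α → 𝕜} {K A : ℝ≥0} {s : Set α} (hh : LipschitzOnWith K h s) (hA : 0 < A)
    (hhA : ∀ x ∈ s, A ≤ ‖h x‖) : LipschitzOnWith (K / A ^ 2) (fun x => (h x)⁻¹) s := by
  refine LipschitzOnWith.of_dist_le_mul fun x hx y hy => ?_
  have hx0 : h x ≠ 0 := norm_pos_iff.1 ((NNReal.coe_pos.2 hA).trans_le (hhA x hx))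
  have hy0 : h y ≠ 0 := norm_pos_iff.1 ((NNReal.coe_pos.2 hA).trans_le (hhA y hy))
  have hA2 : (A : ℝ) ^ 2 ≤ ‖h x‖ * ‖h y‖ := by
    rw [sq]; exact mul_le_mul (hhA x hx) (hhA y hy) A.coe_nonneg (norm_nonneg _)
  calc dist (h x)⁻¹ (h y)⁻¹ = dist (h x) (h y) / (‖h x‖ * ‖h y‖) := dist_inv_inv₀ hx0 hy0
    _ ≤ K * dist x y / (A : ℝ) ^ 2 :=
      div_le_div₀ (by positivity) (hh.dist_le_mul x hx y hy) (by positivity) hA2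
    _ = ↑(K / A ^ 2) * dist x y := by push_cast; ring

theorem LipschitzOnWith.add_const {α E : Type*} [PseudoMetricSpace α] [SeminormedAddCommGroup E]
    {g : α → E} {K : ℝ≥0} {s : Set α} (hg : LipschitzOnWith K g s) (w : E) :
    LipschitzOnWith K (fun x => g x + w) s :=
  LipschitzOnWith.of_dist_le_mul fun x hx y hy => by
    simpa only [dist_add_right] using hg.dist_le_mul x hx y hy

theorem LipschitzOnWith.norm_le_add_mul_of_mem_closedBall {α E : Type*} [PseudoMetricSpace α]
    [SeminormedAddCommGroup E] {g : α → E} {K : ℝ≥0} {a : α} {δ : ℝ}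
    (hg : LipschitzOnWith K g (closedBall a δ)) {z : α} (hz : z ∈ closedBall a δ) :
    ‖g z‖ ≤ ‖g a‖ + K * δ := by
  have hδ : 0 ≤ δ := dist_nonneg.trans hz
  calc ‖g z‖ ≤ ‖g a‖ + dist (g z) (g a) := by
        rw [dist_eq_norm]; exact norm_le_norm_add_norm_sub' _ _
    _ ≤ ‖g a‖ + K * dist z a := by gcongr; exact hg.dist_le_mul z hz a (mem_closedBall_self hδ)
    _ ≤ ‖g a‖ + K * δ := by gcongr; exact hz

theorem eventually_cobounded_exists_inv_eq_add {𝕜 : Type*} [NontriviallyNormedField 𝕜]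
    [CompleteSpace 𝕜] {g : 𝕜 → 𝕜} {K : ℝ≥0} {δ : ℝ} (hδ : 0 < δ)
    (hg : LipschitzOnWith K g (closedBall 0 δ)) :
    ∀ᶠ w in cobounded 𝕜, ∃ z ∈ closedBall 0 δ, z ≠ 0 ∧ z⁻¹ = g z + w := by
  set s := closedBall (0 : 𝕜) δ
  -- `A ≥ K + 1` makes `z ↦ (g z + w)⁻¹` a contraction, `A ≥ δ⁻¹` keeps it inside the ball.
  set A : ℝ≥0 := max (K + 1) δ⁻¹.toNNReal
  have hA : 0 < A := lt_max_of_lt_left (add_pos_of_nonneg_of_pos K.2 one_pos)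
  filter_upwards [tendsto_norm_cobounded_atTop.eventually_ge_atTop (‖g 0‖ + K * δ + A)] with w hw
  have hlow : ∀ z ∈ s, A ≤ ‖g z + w‖ := fun z hz => by
    have := hg.norm_le_add_mul_of_mem_closedBall hz
    have := norm_sub_norm_le w (-g z)
    rw [sub_neg_eq_add, norm_neg, add_comm] at this
    linarith
  have hmaps : MapsTo (fun z => (g z + w)⁻¹) s s := fun z hz => by
    rw [mem_closedBall_zero_iff, norm_inv]
    calc ‖g z + w‖⁻¹ ≤ (A : ℝ)⁻¹ := inv_anti₀ (NNReal.coe_pos.2 hA) (hlow z hz)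
      _ ≤ δ := by
        rw [inv_le_comm₀ (NNReal.coe_pos.2 hA) hδ]
        exact (Real.le_coe_toNNReal _).trans (le_max_right (K + 1 : ℝ≥0) _)
  have hK : K / A ^ 2 < 1 := by
    have hKA : K + 1 ≤ A := le_max_left _ _
    rw [div_lt_one (pow_pos hA 2)]
    calc K < K + 1 := lt_add_one K
      _ ≤ A := hKA
      _ ≤ A ^ 2 := le_self_pow₀ (le_add_self.trans hKA) two_ne_zero
  have hcontr : ContractingWith (K / A ^ 2) (hmaps.restrict _ s s) :=
    ⟨hK, ((hg.add_const w).inv₀ hA hlow).mapsToRestrict hmaps⟩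
  obtain ⟨z, hzs, hfix, -⟩ := hcontr.exists_fixedPoint' isClosed_closedBall.isComplete hmaps
    (mem_closedBall_self hδ.le) (edist_ne_top _ _)
  have hne : g z + w ≠ 0 := norm_pos_iff.1 ((NNReal.coe_pos.2 hA).trans_le (hlow z hzs))
  exact ⟨z, hzs, hfix ▸ inv_ne_zero hne, inv_eq_iff_eq_inv.2 hfix.eq.symm⟩

theorem tendsto_natCast_mul_cobounded {z : ℂ} (hz : z ≠ 0) :
    Tendsto (fun n : ℕ => (n : ℂ) * z) atTop (cobounded ℂ) := by
  rw [← tendsto_norm_atTop_iff_cobounded]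
  simp only [norm_mul, norm_natCast]
  exact tendsto_natCast_atTop_atTop.atTop_mul_const (norm_pos_iff.2 hz)

theorem frequently_exp_eq_one_cobounded : ∃ᶠ w in cobounded ℂ, exp w = 1 :=
  (tendsto_natCast_mul_cobounded two_pi_I_ne_zero).frequently
    (Frequently.of_forall exp_nat_mul_two_pi_mul_I)

theorem Set.infinite_of_frequently_mem_image_cobounded {α E : Type*} [Bornology E]
    {s : Set α} {φ : α → E} (h : ∃ᶠ w in cobounded E, w ∈ φ '' s) : s.Infinite :=
  fun hs => h (hs.image φ).isBounded

/-- Let `U ⊆ ℂ` be open with `0 ∈ U` and let `f` be holomorphic on `U` with `f 0 ≠ 0`.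
Then there are infinitely many `z ∈ U \ {0}` with `exp(1/z) = f z`. -/
theorem infinitely_many_solutions_exp_inv (U : Set ℂ) (hUopen : IsOpen U)
    (h0 : (0 : ℂ) ∈ U) (f : ℂ → ℂ) (hf : DifferentiableOn ℂ f U)
    (hf0 : f 0 ≠ 0) :
    {z : ℂ | z ∈ U ∧ z ≠ 0 ∧ Complex.exp (1 / z) = f z}.Infinite := by
  obtain ⟨g, hg, hexp⟩ := exists_analyticAt_exp_eq (hf.analyticAt (hUopen.mem_nhds h0)) hf0
  obtain ⟨K, t, ht, hgK⟩ := hg.hasStrictFDerivAt.exists_lipschitzOnWith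
  obtain ⟨δ, hδ, hδU⟩ := nhds_basis_closedBall.mem_iff.1
    (inter_mem (inter_mem (hUopen.mem_nhds h0) ht) hexp)
  refine Set.infinite_of_frequently_mem_image_cobounded (φ := fun z => z⁻¹ - g z) ?_
  have hsol := eventually_cobounded_exists_inv_eq_add hδ (hgK.mono fun z hz => (hδU hz).1.2)
  refine (hsol.and_frequently frequently_exp_eq_one_cobounded).mono ?_
  rintro w ⟨⟨z, hz, hz0, hzw⟩, hw⟩
  obtain ⟨⟨hzU, -⟩, hgz⟩ := hδU hz
  refine ⟨z, ⟨hzU, hz0, ?_⟩, by simp [hzw]⟩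
  rw [one_div, hzw, exp_add, hgz, hw, mul_one]
end
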